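/- arXiv:1803.04510 — 6 statements merged into one kernel-verified Lean document; each statement's English description precedes it below -/
import Mathlib

section
/- A matrix pencil (E,A) with E,A ∈ F^{n×n} is regular (i.e., there exists λ ∈ F with det(λE − A) ≠ 0) if and only if there exist invertible matrices S,T ∈ F^{n×n} such that S E T = [[I,0],[0,N]] and S A T = [[J,0],[0,I]] in block form, where N is nilpotent. -/
/-!
If `λE - A` is invertible, multiplying the pencil on the left by `(λE - A)⁻¹` turns it into
`(M, λM - I)` with `M = (λE - A)⁻¹E`. The Fitting decomposition of `M` splits the space into a
part where `M` acts invertibly, as `C`, and a part where it acts nilpotently, as `D`. Rescaling the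
two blocks by `C⁻¹` and by `(λD - I)⁻¹` (invertible because `D` is nilpotent) yields
`diag(I, N)` and `diag(J, I)`. Conversely, in this form `det(λE - A)` is a nonzero multiple of
`det(λI - J) det(λN - I)`; the second factor never vanishes, and the first only at the finitely
many eigenvalues of `J`.
-/

open Matrix Module

namespace Submodule

lemma prodEquivOfIsCompl_symm_conj {R M : Type*} [CommRing R] [AddCommGroup M] [Module R M]
    {p q : Submodule R M} (h : IsCompl p q) (f : End R M) (hp : ∀ x ∈ p, f x ∈ p)
    (hq : ∀ x ∈ q, f x ∈ q) :
    (prodEquivOfIsCompl p q h).symm.conj f =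
      ((f.restrict hp).prodMap (f.restrict hq) : End R (p × q)) := by
  refine LinearMap.ext fun x => (prodEquivOfIsCompl p q h).injective ?_
  simp only [LinearEquiv.conj_apply, LinearMap.comp_apply, LinearEquiv.coe_coe,
    LinearEquiv.symm_symm, LinearEquiv.apply_symm_apply, coe_prodEquivOfIsCompl',
    LinearMap.prodMap_apply, LinearMap.coe_restrict_apply, map_add]

end Submodule

namespace Module.End

section Semiring

variable {R M : Type*} [Semiring R] [AddCommMonoid M] [Module R M]

lemma mapsTo_ker_pow (f : End R M) (k : ℕ) :
    ∀ x ∈ LinearMap.ker (f ^ k), f x ∈ LinearMap.ker (f ^ k) := by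
  intro x hx
  rw [LinearMap.mem_ker] at hx ⊢
  rw [← mul_apply, ← pow_succ, pow_succ', mul_apply, hx, map_zero]

lemma mapsTo_range_pow (f : End R M) (k : ℕ) :
    ∀ x ∈ LinearMap.range (f ^ k), f x ∈ LinearMap.range (f ^ k) := by
  rintro _ ⟨y, rfl⟩
  exact ⟨f y, by rw [← mul_apply, ← pow_succ, pow_succ', mul_apply]⟩

lemma isNilpotent_restrict_ker_pow (f : End R M) (k : ℕ) :
    IsNilpotent (f.restrict (f.mapsTo_ker_pow k)) := by
  refine ⟨k, ?_⟩
  rw [pow_restrict]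
  ext x
  exact LinearMap.mem_ker.mp x.2

end Semiring

variable {K V : Type*} [Field K] [AddCommGroup V] [Module K V] [FiniteDimensional K V]

lemma isUnit_restrict_range_pow {f : End K V} {k : ℕ} (hk : k ≠ 0)
    (h : Disjoint (LinearMap.ker (f ^ k)) (LinearMap.range (f ^ k))) :
    IsUnit (f.restrict (f.mapsTo_range_pow k)) := by
  rw [LinearMap.isUnit_iff_ker_eq_bot, Submodule.eq_bot_iff]
  rintro ⟨x, hx⟩ hx0
  have hfx : f x = 0 := congrArg Subtype.val hx0
  have hxk : x ∈ LinearMap.ker (f ^ k) := by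
    rw [LinearMap.mem_ker, ← Nat.succ_pred_eq_of_ne_zero hk, pow_succ, mul_apply, hfx, map_zero]
  simpa using Submodule.disjoint_def.mp h x hxk hx

theorem exists_basis_toMatrix_eq_fromBlocks (f : End K V) :
    ∃ (nd na : ℕ) (b : Basis (Fin nd ⊕ Fin na) K V) (C : Matrix (Fin nd) (Fin nd) K)
      (D : Matrix (Fin na) (Fin na) K),
      IsUnit C ∧ IsNilpotent D ∧ LinearMap.toMatrix b b f = fromBlocks C 0 0 D := by
  obtain ⟨k, hcompl, hk⟩ :=
    (f.eventually_isCompl_ker_pow_range_pow.and (Filter.eventually_ne_atTop 0)).exists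
  let e := Submodule.prodEquivOfIsCompl _ _ hcompl.symm
  let bR := finBasis K (LinearMap.range (f ^ k))
  let bK := finBasis K (LinearMap.ker (f ^ k))
  refine ⟨_, _, (bR.prod bK).map e,
    LinearMap.toMatrix bR bR (f.restrict (f.mapsTo_range_pow k)),
    LinearMap.toMatrix bK bK (f.restrict (f.mapsTo_ker_pow k)),
    (isUnit_restrict_range_pow hk hcompl.disjoint).map (LinearMap.toMatrixAlgEquiv bR),
    (f.isNilpotent_restrict_ker_pow k).map (LinearMap.toMatrixAlgEquiv bK), ?_⟩
  change LinearMap.toMatrix (bR.prod bK) (bR.prod bK) (e.symm.conj f) = _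
  rw [Submodule.prodEquivOfIsCompl_symm_conj, LinearMap.toMatrix_prodMap]

end Module.End

namespace Matrix

lemma fromBlocks_sub {l m n o α : Type*} [Sub α] (A : Matrix n l α) (B : Matrix n m α)
    (C : Matrix o l α) (D : Matrix o m α) (A' : Matrix n l α) (B' : Matrix n m α)
    (C' : Matrix o l α) (D' : Matrix o m α) :
    fromBlocks A B C D - fromBlocks A' B' C' D' =
      fromBlocks (A - A') (B - B') (C - C') (D - D') := by
  ext (_ | _) (_ | _) <;> rfl

variable {K ι : Type*} [Field K] [Fintype ι] [DecidableEq ι]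

theorem exists_conj_submatrix_eq_fromBlocks (M : Matrix ι ι K) :
    ∃ (nd na : ℕ) (e : ι ≃ Fin nd ⊕ Fin na) (U : Matrix ι ι K)
      (C : Matrix (Fin nd) (Fin nd) K) (D : Matrix (Fin na) (Fin na) K), IsUnit U.det ∧ IsUnit C ∧ IsNilpotent D ∧
      (U⁻¹ * M * U).submatrix e.symm e.symm = fromBlocks C 0 0 D := by
  obtain ⟨nd, na, b, C, D, hC, hD, hb⟩ :=
    Module.End.exists_basis_toMatrix_eq_fromBlocks (toLin' M)
  let b₀ := Pi.basisFun K ι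
  let e := b₀.indexEquiv b
  let b' := b.reindex e.symm
  have hinv : b'.toMatrix b₀ * b₀.toMatrix b' = 1 := b'.toMatrix_mul_toMatrix_flip b₀
  refine ⟨nd, na, e, b₀.toMatrix b', C, D, isUnit_det_of_left_inverse hinv, hC, hD, ?_⟩
  rw [inv_eq_left_inv hinv, ← LinearMap.toMatrix'_toLin' M, ← LinearMap.toMatrix_eq_toMatrix',
    basis_toMatrix_mul_linearMap_toMatrix_mul_basis_toMatrix, ← hb]
  ext i j
  simp [LinearMap.toMatrix_apply, b']

lemma exists_mul_fromBlocks_eq {R m p : Type*} [CommRing R] [Fintype m] [DecidableEq m]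
    [Fintype p] [DecidableEq p] {C : Matrix m m R} {D : Matrix p p R} (hC : IsUnit C)
    (hD : IsNilpotent D) (lam : R) :
    ∃ (Q : Matrix (m ⊕ p) (m ⊕ p) R) (J : Matrix m m R) (N : Matrix p p R),
      IsUnit Q ∧ IsNilpotent N ∧ Q * fromBlocks C 0 0 D = fromBlocks 1 0 0 N ∧
      Q * (lam • fromBlocks C 0 0 D - 1) = fromBlocks J 0 0 1 := by
  obtain ⟨c, rfl⟩ := hC
  obtain ⟨u, hu⟩ := (hD.smul lam).isUnit_sub_one
  have hcomm : Commute (u : Matrix p p R) D := by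
    rw [hu]
    exact ((Commute.refl D).smul_left lam).sub_left (Commute.one_left D)
  refine ⟨fromBlocks ↑c⁻¹ 0 0 ↑u⁻¹, (↑c⁻¹ : Matrix m m R) * (lam • ↑c - 1),
    (↑u⁻¹ : Matrix p p R) * D,
    isUnit_fromBlocks_zero₂₁.mpr ⟨c⁻¹.isUnit, u⁻¹.isUnit⟩,
    hcomm.units_inv_left.isNilpotent_mul_left hD, ?_, ?_⟩
  · simp [fromBlocks_multiply]
  · rw [fromBlocks_smul, ← fromBlocks_one, fromBlocks_sub, fromBlocks_multiply, ← hu]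
    simp

def HasQuasiWeierstrassForm (E A : Matrix ι ι K) : Prop :=
  ∃ (nd na : ℕ) (e : ι ≃ Fin nd ⊕ Fin na) (S T : Matrix ι ι K)
    (N : Matrix (Fin na) (Fin na) K) (J : Matrix (Fin nd) (Fin nd) K),
    IsUnit S.det ∧ IsUnit T.det ∧ IsNilpotent N ∧
    (S * E * T).submatrix e.symm e.symm = fromBlocks 1 0 0 N ∧
    (S * A * T).submatrix e.symm e.symm = fromBlocks J 0 0 1

lemma HasQuasiWeierstrassForm.of_mul_left {E A P : Matrix ι ι K} (hP : IsUnit P.det)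
    (h : HasQuasiWeierstrassForm (P * E) (P * A)) : HasQuasiWeierstrassForm E A := by
  obtain ⟨nd, na, e, S, T, N, J, hS, hT, hN, hE, hA⟩ := h
  refine ⟨nd, na, e, S * P, T, N, J, by rw [det_mul]; exact hS.mul hP, hT, hN, ?_, ?_⟩
  · rwa [mul_assoc S P E]
  · rwa [mul_assoc S P A]

theorem hasQuasiWeierstrassForm_smul_sub_one (M : Matrix ι ι K) (lam : K) :
    HasQuasiWeierstrassForm M (lam • M - 1) := by
  obtain ⟨nd, na, e, U, C, D, hU, hC, hD, hM⟩ := M.exists_conj_submatrix_eq_fromBlocks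
  obtain ⟨Q, J, N, hQ, hN, hQE, hQA⟩ := exists_mul_fromBlocks_eq hC hD lam
  let r := reindexAlgEquiv K K e
  have hr (X : Matrix ι ι K) : X.submatrix e.symm e.symm = r X := rfl
  have hconj (X : Matrix ι ι K) : r (r.symm Q * U⁻¹ * X * U) = Q * r (U⁻¹ * X * U) := by
    rw [show r.symm Q * U⁻¹ * X * U = r.symm Q * (U⁻¹ * X * U) by simp only [mul_assoc],
      map_mul, r.apply_symm_apply]
  refine ⟨nd, na, e, r.symm Q * U⁻¹, U, N, J, ?_, hU, hN, ?_, ?_⟩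
  · rw [det_mul]
    exact ((isUnit_iff_isUnit_det _).mp (hQ.map r.symm)).mul (isUnit_nonsing_inv_det U hU)
  · rw [hr, hconj, ← hr, hM, hQE]
  · have : U⁻¹ * (lam • M - 1) * U = lam • (U⁻¹ * M * U) - 1 := by
      rw [mul_sub, sub_mul, mul_one, nonsing_inv_mul U hU, mul_smul_comm, smul_mul_assoc]
    rw [hr, hconj, this, map_sub, map_smul, map_one, ← hr, hM, hQA]

theorem hasQuasiWeierstrassForm_of_det_ne_zero {E A : Matrix ι ι K} {lam : K}
    (h : (lam • E - A).det ≠ 0) : HasQuasiWeierstrassForm E A := by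
  set P := lam • E - A
  have hP : IsUnit P.det := h.isUnit
  have hA : P⁻¹ * A = lam • (P⁻¹ * E) - 1 := by
    rw [← nonsing_inv_mul P hP, ← mul_smul_comm, ← mul_sub, sub_sub_cancel]
  refine .of_mul_left (isUnit_nonsing_inv_det P hP) ?_
  rw [hA]
  exact hasQuasiWeierstrassForm_smul_sub_one _ lam

theorem HasQuasiWeierstrassForm.exists_det_ne_zero [Infinite K] {E A : Matrix ι ι K}
    (h : HasQuasiWeierstrassForm E A) : ∃ lam : K, (lam • E - A).det ≠ 0 := by
  obtain ⟨nd, na, e, S, T, N, J, hS, hT, hN, hE, hA⟩ := h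
  obtain ⟨lam, hlam⟩ := J.finite_spectrum.exists_notMem
  refine ⟨lam, ?_⟩
  have hblocks : (S * (lam • E - A) * T).submatrix e.symm e.symm =
      fromBlocks (lam • 1 - J) 0 0 (lam • N - 1) := by
    rw [mul_sub, sub_mul, mul_smul_comm, smul_mul_assoc]
    change lam • (S * E * T).submatrix e.symm e.symm - (S * A * T).submatrix e.symm e.symm = _
    rw [hE, hA, fromBlocks_smul, fromBlocks_sub]
    simp
  have hunit : IsUnit (S * (lam • E - A) * T).det := by
    rw [← det_submatrix_equiv_self e.symm, hblocks, ← isUnit_iff_isUnit_det]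
    refine isUnit_fromBlocks_zero₂₁.mpr ⟨?_, (hN.smul lam).isUnit_sub_one⟩
    rwa [← Algebra.algebraMap_eq_smul_one, ← spectrum.notMem_iff]
  rw [det_mul, det_mul] at hunit
  exact (isUnit_of_mul_isUnit_right (isUnit_of_mul_isUnit_left hunit)).ne_zero

end Matrix

/-- Quasi-Weierstraß form: a matrix pencil `(E, A)` is regular iff there exist
invertible `S, T` bringing it to the block form `SET = diag(I, N)`, `SAT = diag(J, I)`
with `N` nilpotent. -/
theorem quasi_weierstrass_form {F : Type*} [RCLike F] {n : ℕ}
    (E A : Matrix (Fin n) (Fin n) F) :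
    (∃ lam : F, (lam • E - A).det ≠ 0) ↔
    ∃ (nd na : ℕ) (e : Fin n ≃ Fin nd ⊕ Fin na)
      (S T : Matrix (Fin n) (Fin n) F)
      (N : Matrix (Fin na) (Fin na) F) (J : Matrix (Fin nd) (Fin nd) F),
      IsUnit S.det ∧ IsUnit T.det ∧ IsNilpotent N ∧
      (S * E * T).submatrix e.symm e.symm = Matrix.fromBlocks 1 0 0 N ∧
      (S * A * T).submatrix e.symm e.symm = Matrix.fromBlocks J 0 0 1 :=
  ⟨fun ⟨_, h⟩ => Matrix.hasQuasiWeierstrassForm_of_det_ne_zero h,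
    Matrix.HasQuasiWeierstrassForm.exists_det_ne_zero⟩
end

section
/- Let N ∈ F^{m×m} be nilpotent with N^ν = 0 and let h : [0,τ] → F^m be ν-times continuously differentiable. Then w : [0,τ] → F^m defined by w(t) = −∑_{k=0}^{ν−1} N^k h^{(k)}(t) is the unique continuously differentiable solution of N ẇ(t) = w(t) + h(t) on [0,τ]. -/
/-!
Differentiating `w = -∑ N^k h^(k)` termwise, `N ẇ = -∑_{k ≥ 1} N^k h^(k)` telescopes to `w + h`
because `N^ν = 0`. For uniqueness, the difference `d` of two solutions satisfies `d = N ḋ`. If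
`N^(k+1) d` vanishes on the open interval `(0, τ)`, so does its derivative `N^(k+1) ḋ = N^k d`;
downward induction from `N^ν = 0` gives `d = 0` on `(0, τ)`, and continuity extends this to
`[0, τ]`.
-/

open Finset Set

section Nilpotent

variable {𝕜 E G : Type*} [NontriviallyNormedField 𝕜] [NormedAddCommGroup E] [NormedSpace 𝕜 E]
  [NormedAddCommGroup G] [NormedSpace 𝕜 G]

theorem contDiff_one_sum_apply_iteratedDeriv (B : ℕ → E →L[𝕜] G) {n : ℕ} {h : 𝕜 → E}
    (hh : ContDiff 𝕜 n h) :
    ContDiff 𝕜 1 fun t => ∑ k ∈ range n, B k (iteratedDeriv k h t) := by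
  refine ContDiff.sum fun k hk => (B k).contDiff.comp ?_
  have hk : k + 1 ≤ n := mem_range.mp hk
  exact (contDiff_nat_succ_iff_contDiff_one_iteratedDeriv.mp (hh.of_le (by exact_mod_cast hk))).2

theorem hasDerivAt_sum_apply_iteratedDeriv (B : ℕ → E →L[𝕜] G) {n : ℕ} {h : 𝕜 → E}
    (hh : ContDiff 𝕜 n h) (t : 𝕜) :
    HasDerivAt (fun s => ∑ k ∈ range n, B k (iteratedDeriv k h s))
      (∑ k ∈ range n, B k (iteratedDeriv (k + 1) h t)) t := by
  refine HasDerivAt.fun_sum fun k hk => ?_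
  have hdiff : Differentiable 𝕜 (iteratedDeriv k h) :=
    hh.differentiable_iteratedDeriv k (by exact_mod_cast mem_range.mp hk)
  rw [iteratedDeriv_succ]
  exact (B k).hasFDerivAt.comp_hasDerivAt t (hdiff t).hasDerivAt

theorem apply_sum_pow_apply_succ {A : E →L[𝕜] E} {n : ℕ} (hA : A ^ n = 0) (g : ℕ → E) :
    A (∑ k ∈ range n, (A ^ k) (g (k + 1))) = ∑ k ∈ range n, (A ^ k) (g k) - g 0 := by
  have hsucc := sum_range_succ' (fun k => (A ^ k) (g k)) n
  rw [sum_range_succ, hA, zero_apply, add_zero] at hsucc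
  simp only [map_sum, ← mul_apply_eq_comp, ← pow_succ', hsucc, pow_zero,
    one_apply_eq_self, add_sub_cancel_right]

theorem apply_deriv_neg_sum_pow_apply_iteratedDeriv {A : E →L[𝕜] E} {n : ℕ} (hA : A ^ n = 0)
    {h : 𝕜 → E} (hh : ContDiff 𝕜 n h) (t : 𝕜) :
    A (deriv (fun s => -∑ k ∈ range n, (A ^ k) (iteratedDeriv k h s)) t) =
      -∑ k ∈ range n, (A ^ k) (iteratedDeriv k h t) + h t := by
  rw [(hasDerivAt_sum_apply_iteratedDeriv (A ^ ·) hh t).fun_neg.deriv, map_neg,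
    apply_sum_pow_apply_succ hA (fun k => iteratedDeriv k h t), iteratedDeriv_zero]
  abel

theorem pow_apply_eq_zero_of_pow_succ_apply_eq_zero {A : E →L[𝕜] E} {d : 𝕜 → E} {U : Set 𝕜} (hU : IsOpen U)
    (hd : DifferentiableOn 𝕜 d U) (hAd : ∀ x ∈ U, A (deriv d x) = d x) {k : ℕ}
    (hk : ∀ x ∈ U, (A ^ (k + 1)) (d x) = 0) (x : 𝕜) (hx : x ∈ U) : (A ^ k) (d x) = 0 := by
  have hderiv : HasDerivAt (fun y => (A ^ (k + 1)) (d y)) ((A ^ k) (d x)) x := by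
    rw [← hAd x hx, ← mul_apply_eq_comp, ← pow_succ]
    exact (A ^ (k + 1)).hasFDerivAt.comp_hasDerivAt x
      ((hd x hx).differentiableAt (hU.mem_nhds hx)).hasDerivAt
  have hzero : HasDerivAt (fun y => (A ^ (k + 1)) (d y)) 0 x :=
    (hasDerivAt_const x 0).congr_of_eventuallyEq (Filter.eventually_of_mem (hU.mem_nhds hx) hk)
  exact hderiv.unique hzero

theorem eqOn_zero_of_apply_deriv_eq {A : E →L[𝕜] E} {n : ℕ} (hA : A ^ n = 0) {d : 𝕜 → E}
    {U : Set 𝕜} (hU : IsOpen U) (hd : DifferentiableOn 𝕜 d U)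
    (hAd : ∀ x ∈ U, A (deriv d x) = d x) : EqOn d 0 U := by
  have hpow : ∀ x ∈ U, (A ^ 0) (d x) = 0 :=
    Nat.decreasingInduction (motive := fun k _ => ∀ x ∈ U, (A ^ k) (d x) = 0)
      (fun _ _ => pow_apply_eq_zero_of_pow_succ_apply_eq_zero hU hd hAd)
      (fun x _ => by rw [hA, zero_apply]) n.zero_le
  intro x hx
  simpa only [pow_zero, one_apply_eq_self, Pi.zero_apply] using hpow x hx

end Nilpotent

theorem eqOn_Icc_of_apply_deriv_eq_add {E : Type*} [NormedAddCommGroup E] [NormedSpace ℝ E]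
    {A : E →L[ℝ] E} {n : ℕ} (hA : A ^ n = 0) {a b : ℝ} (hab : a < b) {h u v : ℝ → E}
    (hu : Differentiable ℝ u) (hv : Differentiable ℝ v)
    (hu_eq : ∀ t ∈ Icc a b, A (deriv u t) = u t + h t)
    (hv_eq : ∀ t ∈ Icc a b, A (deriv v t) = v t + h t) : EqOn u v (Icc a b) := by
  have hdiff : EqOn (u - v) 0 (Ioo a b) := by
    refine eqOn_zero_of_apply_deriv_eq hA isOpen_Ioo (hu.sub hv).differentiableOn fun t ht => ?_
    have ht' := Ioo_subset_Icc_self ht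
    rw [deriv_sub (hu t) (hv t), map_sub, hu_eq t ht', hv_eq t ht', Pi.sub_apply]
    abel
  have hclosure : EqOn (u - v) 0 (Icc a b) :=
    hdiff.of_subset_closure (hu.sub hv).continuous.continuousOn continuousOn_const
      Ioo_subset_Icc_self (closure_Ioo hab.ne).ge
  exact fun t ht => sub_eq_zero.mp (hclosure ht)

/-- The fast subsystem `N ẇ = w + h` with `N^ν = 0` and `h` ν-times continuously
differentiable has `w(t) = -∑_{k<ν} N^k h^(k)(t)` as its unique C¹ solution on `[0, τ]`. -/
theorem fast_subsystem_unique_solution {F : Type*} [RCLike F] {m ν : ℕ}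
    (N : Matrix (Fin m) (Fin m) F) (hN : N ^ ν = 0)
    {τ : ℝ} (hτ : 0 < τ) (h : ℝ → Fin m → F) (hh : ContDiff ℝ (ν : ℕ∞) h)
    (w : ℝ → Fin m → F)
    (hw : w = fun t => -∑ k ∈ Finset.range ν, (N ^ k).mulVec (iteratedDeriv k h t)) :
    ContDiff ℝ 1 w ∧
    (∀ t ∈ Set.Icc (0 : ℝ) τ, N.mulVec (deriv w t) = w t + h t) ∧
    ∀ u : ℝ → Fin m → F, ContDiff ℝ 1 u →
      (∀ t ∈ Set.Icc (0 : ℝ) τ, N.mulVec (deriv u t) = u t + h t) →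
      ∀ t ∈ Set.Icc (0 : ℝ) τ, u t = w t := by
  set A : (Fin m → F) →L[ℝ] (Fin m → F) :=
    (LinearMap.toContinuousLinearMap N.mulVecLin).restrictScalars ℝ
  have hA_pow : ∀ k v, (A ^ k) v = (N ^ k).mulVec v := by
    intro k
    induction k with
    | zero => simp
    | succ k ih =>
      intro v
      rw [pow_succ, mul_apply_eq_comp, ih, pow_succ, ← Matrix.mulVec_mulVec]
      rfl
  have hA : A ^ ν = 0 := ContinuousLinearMap.ext fun v => by
    rw [hA_pow, hN, Matrix.zero_mulVec, zero_apply]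
  have hw_A : w = fun t => -∑ k ∈ range ν, (A ^ k) (iteratedDeriv k h t) := by
    simp only [hA_pow, hw]
  have hw_C1 : ContDiff ℝ 1 w := hw_A ▸ (contDiff_one_sum_apply_iteratedDeriv (A ^ ·) hh).neg
  have hw_eq : ∀ t, N.mulVec (deriv w t) = w t + h t := by
    intro t
    rw [hw_A]
    exact apply_deriv_neg_sum_pow_apply_iteratedDeriv hA hh t
  exact ⟨hw_C1, fun t _ => hw_eq t, fun u hu hu_eq =>
    eqOn_Icc_of_apply_deriv_eq_add hA hτ (hu.differentiable one_ne_zero)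
      (hw_C1.differentiable one_ne_zero) hu_eq (fun t _ => hw_eq t)⟩
end

section
/- Let N ∈ F^{m×m} be nilpotent with N^ν = 0, and let h : [0,τ] → F^m be smooth. If a C¹ function w satisfies N ẇ(t) = w(t) + h(t) on [0,τ], then the initial value w(0) necessarily equals −∑_{k=0}^{ν−1} N^k h^{(k)}(0); i.e., an initial condition w₀ is consistent for the fast subsystem if and only if w₀ = −∑_{k=0}^{ν−1} N^k h^{(k)}(0). -/
/-!
Subtracting the explicit solution `w_p = -∑_{k<ν} N^k h^{(k)}` (whose defining equation telescopes
because `N^ν = 0`) reduces the claim to the homogeneous equation `N u' = u`. There, if `N^{k+1} u`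
vanishes on the interval then so does its derivative `N^{k+1} u'`, which is `N^k u`; descending from
`N^ν u = 0` gives `u = 0`.
-/

open Set Finset
open scoped ContDiff

section

variable {E : Type*} [NormedAddCommGroup E] [NormedSpace ℝ E]

theorem deriv_eq_zero_of_eqOn_zero {g : ℝ → E} {s : Set ℝ} {t : ℝ}
    (hg : DifferentiableAt ℝ g t) (hs : UniqueDiffWithinAt ℝ s t) (ht : t ∈ s)
    (hzero : EqOn g 0 s) : deriv g t = 0 := by
  rw [← hg.derivWithin hs, derivWithin_congr hzero (hzero ht), derivWithin_zero, Pi.zero_apply]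

theorem eqOn_zero_of_apply_deriv_eq_self {N : E →L[ℝ] E} (hN : IsNilpotent N) {u : ℝ → E}
    {s : Set ℝ} (hu : ∀ t ∈ s, DifferentiableAt ℝ u t) (hs : UniqueDiffOn ℝ s)
    (hsol : ∀ t ∈ s, N (deriv u t) = u t) : EqOn u 0 s := by
  obtain ⟨ν, hν⟩ := hN
  suffices ∀ k, EqOn (fun t ↦ (N ^ k) (u t)) 0 s → EqOn u 0 s from
    this ν fun t _ ↦ by simp [hν]
  intro k
  induction k with
  | zero => simp
  | succ k ih =>
    refine fun hk ↦ ih fun t ht ↦ ?_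
    have hderiv : HasDerivAt (fun t ↦ (N ^ (k + 1)) (u t)) ((N ^ (k + 1)) (deriv u t)) t :=
      (N ^ (k + 1)).hasFDerivAt.comp_hasDerivAt t (hu t ht).hasDerivAt
    calc (N ^ k) (u t) = (N ^ (k + 1)) (deriv u t) := by
          rw [← hsol t ht, pow_succ]; rfl
      _ = 0 := hderiv.deriv ▸ deriv_eq_zero_of_eqOn_zero hderiv.differentiableAt (hs t ht) ht hk

noncomputable def fastSubsystemSolution (N : E →L[ℝ] E) (ν : ℕ) (h : ℝ → E) (t : ℝ) : E :=
  -∑ k ∈ range ν, (N ^ k) (iteratedDeriv k h t)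

variable {N : E →L[ℝ] E} {ν : ℕ} {h : ℝ → E}

theorem contDiff_fastSubsystemSolution (hh : ContDiff ℝ ∞ h) :
    ContDiff ℝ ∞ (fastSubsystemSolution N ν h) := by
  refine (ContDiff.sum fun k _ ↦ (N ^ k).contDiff.comp ?_).neg
  rw [iteratedDeriv_eq_iterate]
  exact hh.iterate_deriv k

theorem hasDerivAt_fastSubsystemSolution (hh : ContDiff ℝ ∞ h) (t : ℝ) :
    HasDerivAt (fastSubsystemSolution N ν h)
      (-∑ k ∈ range ν, (N ^ k) (iteratedDeriv (k + 1) h t)) t := by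
  refine (HasDerivAt.fun_sum fun k _ ↦ (N ^ k).hasFDerivAt.comp_hasDerivAt t ?_).neg
  rw [iteratedDeriv_succ]
  exact (hh.differentiable_iteratedDeriv k (by exact_mod_cast ENat.natCast_lt_top k) t).hasDerivAt

theorem apply_deriv_fastSubsystemSolution (hN : N ^ ν = 0) (hh : ContDiff ℝ ∞ h) (t : ℝ) :
    N (deriv (fastSubsystemSolution N ν h) t) = fastSubsystemSolution N ν h t + h t := by
  have hshift : ∑ k ∈ range ν, (N ^ (k + 1)) (iteratedDeriv (k + 1) h t)
      = ∑ k ∈ range ν, (N ^ k) (iteratedDeriv k h t) - h t := by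
    have := sum_range_succ' (fun k ↦ (N ^ k) (iteratedDeriv k h t)) ν
    rw [sum_range_succ, hN, zero_apply, add_zero] at this
    rw [this, pow_zero, iteratedDeriv_zero, one_apply_eq_self, add_sub_cancel_right]
  rw [(hasDerivAt_fastSubsystemSolution hh t).deriv, map_neg, map_sum]
  simp only [← mul_apply_eq_comp, ← pow_succ']
  rw [hshift, fastSubsystemSolution]
  abel

end

namespace Matrix

variable {F : Type*} [RCLike F] {n : Type*} [Fintype n]

noncomputable def mulVecCLM (A : Matrix n n F) : (n → F) →L[ℝ] (n → F) :=
  (LinearMap.toContinuousLinearMap A.mulVecLin).restrictScalars ℝ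

theorem mulVecCLM_apply (A : Matrix n n F) (v : n → F) : A.mulVecCLM v = A.mulVec v :=
  rfl

theorem mulVecCLM_pow_apply [DecidableEq n] (A : Matrix n n F) (k : ℕ) (v : n → F) :
    (A.mulVecCLM ^ k) v = (A ^ k).mulVec v := by
  induction k with
  | zero => simp
  | succ k ih => rw [pow_succ', mul_apply_eq_comp, ih, pow_succ', ← mulVec_mulVec]; rfl

end Matrix

/-- Consistency of initial conditions for the fast subsystem `N ẇ = w + h` with
`N^ν = 0` and smooth `h`: an initial value `w₀` is consistent (i.e. some C¹ solution on
`[0, τ]` attains it at `t = 0`) iff `w₀ = -∑_{k<ν} N^k h^(k)(0)`. -/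
theorem fast_subsystem_consistent_initial_condition {F : Type*} [RCLike F] {m ν : ℕ}
    (N : Matrix (Fin m) (Fin m) F) (hN : N ^ ν = 0)
    {τ : ℝ} (hτ : 0 < τ) (h : ℝ → Fin m → F) (hh : ContDiff ℝ (⊤ : ℕ∞) h)
    (w₀ : Fin m → F) :
    (∃ w : ℝ → Fin m → F, ContDiff ℝ 1 w ∧
      (∀ t ∈ Set.Icc (0 : ℝ) τ, N.mulVec (deriv w t) = w t + h t) ∧ w 0 = w₀) ↔
    w₀ = -∑ k ∈ Finset.range ν, (N ^ k).mulVec (iteratedDeriv k h 0) := by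
  have hN' : N.mulVecCLM ^ ν = 0 := by
    ext1 v
    rw [Matrix.mulVecCLM_pow_apply, hN, Matrix.zero_mulVec, zero_apply]
  set wp := fastSubsystemSolution N.mulVecCLM ν h
  have hwp : ContDiff ℝ ∞ wp := contDiff_fastSubsystemSolution hh
  have hwp_sol (t : ℝ) : N.mulVec (deriv wp t) = wp t + h t :=
    apply_deriv_fastSubsystemSolution hN' hh t
  have hwp_zero : wp 0 = -∑ k ∈ Finset.range ν, (N ^ k).mulVec (iteratedDeriv k h 0) := by
    simp only [wp, fastSubsystemSolution, Matrix.mulVecCLM_pow_apply]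
  rw [← hwp_zero]
  constructor
  · rintro ⟨w, hw, hw_sol, rfl⟩
    have hwd : Differentiable ℝ w := hw.differentiable one_ne_zero
    have hwpd : Differentiable ℝ wp := hwp.differentiable (by simp)
    have hdiff_sol : ∀ t ∈ Icc 0 τ, N.mulVecCLM (deriv (w - wp) t) = (w - wp) t := by
      intro t ht
      rw [deriv_sub (hwd t) (hwpd t), map_sub, Matrix.mulVecCLM_apply, Matrix.mulVecCLM_apply,
        hw_sol t ht, hwp_sol t, Pi.sub_apply, add_sub_add_right_eq_sub]
    have hdiff_zero := eqOn_zero_of_apply_deriv_eq_self ⟨ν, hN'⟩ (fun t _ ↦ (hwd.sub hwpd) t)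
      (uniqueDiffOn_Icc hτ) hdiff_sol (left_mem_Icc.mpr hτ.le)
    exact sub_eq_zero.mp hdiff_zero
  · intro hw₀
    exact ⟨wp, hwp.of_le (by simp), fun t _ ↦ hwp_sol t, hw₀.symm⟩
end

section
/- With the notation of the underlying ODE: if x is a C¹ solution of ẋ = A^diff x + ∑_{k=0}^{ν} C_k q^{(k)} on [0,τ] and there exists s ∈ [0,τ] such that x(s) = A^con x(s) + ∑_{k=1}^{ν} C_k q^{(k−1)}(s), where A^con = T [[I,0],[0,0]] T^{-1}, then x is a solution of E ẋ = A x + q on [0,τ]. -/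
/-!
In the coordinates `y = T⁻¹ x` and `p_k = S q⁽ᵏ⁾` all matrices are block diagonal, and the
first block row of the DAE is literally the first block row of the ODE. For the nilpotent
block, `y₂ + ∑_{k<ν} N^k p_{k,2}` has zero derivative by the second row of the ODE and vanishes
at `s` by the consistency condition, so it vanishes on the whole interval. Multiplying the
second ODE row by `N` shifts the sum by one index, and since `N^ν = 0` this gives
`N ẏ₂ = y₂ + p_{0,2}`.
-/

open Matrix Set Finset

theorem Finset.sum_range_shift_of_eq_zero {M : Type*} [AddCommGroup M] (f : ℕ → M) {ν : ℕ}
    (hf : f ν = 0) : ∑ k ∈ range ν, f (k + 1) = ∑ k ∈ range ν, f k - f 0 := by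
  have h := sum_range_succ' f ν
  rw [sum_range_succ, hf, add_zero] at h
  exact eq_sub_of_add_eq h.symm

theorem Matrix.eq_inv_mul_mul_inv_of_mul_mul_eq {n R : Type*} [Fintype n] [DecidableEq n]
    [CommRing R] {S T M B : Matrix n n R} (hS : IsUnit S.det) (hT : IsUnit T.det)
    (h : S * M * T = B) : M = S⁻¹ * B * T⁻¹ := by
  rw [← h, Matrix.mul_assoc, Matrix.mul_assoc, mul_nonsing_inv _ hT, mul_one,
    nonsing_inv_mul_cancel_left _ _ hS]

theorem Convex.eq_zero_of_hasDerivWithinAt_zero {E : Type*} [NormedAddCommGroup E]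
    [NormedSpace ℝ E] {f : ℝ → E} {I : Set ℝ} (hI : Convex ℝ I)
    (hf : ∀ t ∈ I, HasDerivWithinAt f 0 I t) {s : ℝ} (hs : s ∈ I) (hfs : f s = 0) :
    ∀ t ∈ I, f t = 0 := by
  intro t ht
  have := hI.norm_image_sub_le_of_norm_hasDerivWithin_le hf (fun _ _ => norm_zero.le) hs ht
  rwa [zero_mul, norm_le_zero_iff, hfs, sub_zero] at this

open scoped ContDiff in
theorem ContDiff.hasDerivAt_iteratedDeriv {𝕜 E : Type*} [NontriviallyNormedField 𝕜]
    [NormedAddCommGroup E] [NormedSpace 𝕜 E] {f : 𝕜 → E} (hf : ContDiff 𝕜 ∞ f) (k : ℕ)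
    (t : 𝕜) : HasDerivAt (iteratedDeriv k f) (iteratedDeriv (k + 1) f t) t := by
  rw [iteratedDeriv_succ]
  exact (hf.differentiable_iteratedDeriv k (mod_cast ENat.natCast_lt_top k) t).hasDerivAt

section

variable {F : Type*} [RCLike F]

theorem HasDerivAt.const_mulVec {m n : Type*} [Fintype m] [Fintype n] (M : Matrix m n F)
    {f : ℝ → n → F} {f' : n → F} {t : ℝ} (hf : HasDerivAt f f' t) :
    HasDerivAt (fun u => M *ᵥ f u) (M *ᵥ f') t :=
  (LinearMap.toContinuousLinearMap
    ((mulVecLin M).restrictScalars ℝ)).hasFDerivAt.comp_hasDerivAt t hf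

theorem nilpotent_dae_of_underlying_ode {n : Type*} [Fintype n] [DecidableEq n]
    {N : Matrix n n F} {ν : ℕ} (hN : N ^ ν = 0) {I : Set ℝ} (hI : Convex ℝ I)
    {z z' : ℝ → n → F} {r : ℕ → ℝ → n → F}
    (hz : ∀ t ∈ I, HasDerivAt z (z' t) t)
    (hr : ∀ k, ∀ t ∈ I, HasDerivAt (r k) (r (k + 1) t) t)
    (hode : ∀ t ∈ I, z' t = -∑ k ∈ range ν, N ^ k *ᵥ r (k + 1) t)
    {s : ℝ} (hs : s ∈ I) (hcons : z s = -∑ k ∈ range ν, N ^ k *ᵥ r k s) :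
    ∀ t ∈ I, N *ᵥ z' t = z t + r 0 t := by
  have hw : ∀ t ∈ I, z t + ∑ k ∈ range ν, N ^ k *ᵥ r k t = 0 := by
    refine hI.eq_zero_of_hasDerivWithinAt_zero (fun t ht => ?_) hs
      (by rw [hcons, neg_add_cancel])
    have hderiv := (hz t ht).add
      (HasDerivAt.fun_sum (u := range ν) fun k _ => (hr k t ht).const_mulVec (N ^ k))
    rw [hode t ht, neg_add_cancel] at hderiv
    exact hderiv.hasDerivWithinAt
  intro t ht
  calc N *ᵥ z' t = -∑ k ∈ range ν, N ^ (k + 1) *ᵥ r (k + 1) t := by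
        simp only [hode t ht, mulVec_neg, mulVec_sum, mulVec_mulVec, pow_succ']
    _ = -(∑ k ∈ range ν, N ^ k *ᵥ r k t - r 0 t) := by
        rw [sum_range_shift_of_eq_zero (fun k => N ^ k *ᵥ r k t) (by simp [hN]),
          pow_zero, one_mulVec]
    _ = z t + r 0 t := by
        rw [eq_neg_of_add_eq_zero_left (hw t ht)]
        abel

theorem fromBlocks_dae_of_underlying_ode {m n : Type*} [Fintype m] [Fintype n]
    [DecidableEq m] [DecidableEq n] {J : Matrix m m F} {N : Matrix n n F} {ν : ℕ}
    (hN : N ^ ν = 0) {I : Set ℝ} (hI : Convex ℝ I) {y y' : ℝ → m ⊕ n → F}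
    {p : ℕ → ℝ → m ⊕ n → F} (hy : ∀ t ∈ I, HasDerivAt y (y' t) t)
    (hp : ∀ k, ∀ t ∈ I, HasDerivAt (p k) (p (k + 1) t) t)
    (hode : ∀ t ∈ I, y' t = fromBlocks J 0 0 0 *ᵥ y t + ∑ k ∈ range (ν + 1),
      (if k = 0 then fromBlocks 1 0 0 0 else -fromBlocks 0 0 0 (N ^ (k - 1))) *ᵥ p k t)
    {s : ℝ} (hs : s ∈ I)
    (hcons : y s = fromBlocks 1 0 0 0 *ᵥ y s +
      ∑ k ∈ range ν, (-fromBlocks 0 0 0 (N ^ k)) *ᵥ p k s) :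
    ∀ t ∈ I, fromBlocks 1 0 0 N *ᵥ y' t = fromBlocks J 0 0 1 *ᵥ y t + p 0 t := by
  have hode_blocks : ∀ t ∈ I, y' t ∘ Sum.inl = J *ᵥ (y t ∘ Sum.inl) + p 0 t ∘ Sum.inl ∧
      y' t ∘ Sum.inr = -∑ k ∈ range ν, N ^ k *ᵥ (p (k + 1) t ∘ Sum.inr) := by
    intro t ht
    have h := hode t ht
    simp only [sum_range_succ', if_pos, Nat.succ_ne_zero, if_false, Nat.add_sub_cancel,
      neg_mulVec, sum_neg_distrib] at h
    constructor <;> ext i <;> simp [h, fromBlocks_mulVec, Finset.sum_apply]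
  have hcons_inr : y s ∘ Sum.inr = -∑ k ∈ range ν, N ^ k *ᵥ (p k s ∘ Sum.inr) := by
    ext i
    rw [hcons]
    simp [neg_mulVec, fromBlocks_mulVec, Finset.sum_apply]
  have hasDerivAt_inr : ∀ {f : ℝ → m ⊕ n → F} {f' : m ⊕ n → F} {t : ℝ},
      HasDerivAt f f' t → HasDerivAt (fun u => f u ∘ Sum.inr) (f' ∘ Sum.inr) t :=
    fun hf => hasDerivAt_pi.2 fun i => hasDerivAt_pi.1 hf (Sum.inr i)
  have hnil := nilpotent_dae_of_underlying_ode hN hI (fun t ht => hasDerivAt_inr (hy t ht))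
    (fun k t ht => hasDerivAt_inr (hp k t ht)) (fun t ht => (hode_blocks t ht).2) hs hcons_inr
  intro t ht
  ext (i | i)
  · simpa [fromBlocks_mulVec] using congrFun (hode_blocks t ht).1 i
  · simpa [fromBlocks_mulVec] using congrFun (hnil t ht) i
end

/-- Converse part of the underlying-ODE proposition: a C¹ solution `x` of the
underlying ODE `ẋ = A^diff x + ∑_{k=0}^{ν} C_k q^(k)` which satisfies the consistency
condition `x(s) = A^con x(s) + ∑_{k=1}^{ν} C_k q^(k-1)(s)` at some `s ∈ [0, τ]` is a
solution of the DAE `E ẋ = A x + q` on `[0, τ]`. -/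
theorem underlying_ODE_converse {F : Type*} [RCLike F] {nd na ν : ℕ}
    (E A S T : Matrix (Fin nd ⊕ Fin na) (Fin nd ⊕ Fin na) F)
    (N : Matrix (Fin na) (Fin na) F) (J : Matrix (Fin nd) (Fin nd) F)
    (hS : IsUnit S.det) (hT : IsUnit T.det)
    (hE : S * E * T = Matrix.fromBlocks 1 0 0 N)
    (hA : S * A * T = Matrix.fromBlocks J 0 0 1)
    (hN : N ^ ν = 0)
    {τ : ℝ} (q x : ℝ → (Fin nd ⊕ Fin na) → F)
    (hq : ContDiff ℝ (⊤ : ℕ∞) q) (hx : ContDiff ℝ 1 x)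
    (hode : ∀ t ∈ Set.Icc (0 : ℝ) τ,
      deriv x t = (T * Matrix.fromBlocks J 0 0 0 * T⁻¹).mulVec (x t) +
        ∑ k ∈ Finset.range (ν + 1),
          (if k = 0 then T * Matrix.fromBlocks 1 0 0 0 * S
            else -(T * Matrix.fromBlocks 0 0 0 (N ^ (k - 1)) * S)).mulVec
            (iteratedDeriv k q t))
    (hcons : ∃ s ∈ Set.Icc (0 : ℝ) τ,
      x s = (T * Matrix.fromBlocks 1 0 0 0 * T⁻¹).mulVec (x s) +
        ∑ k ∈ Finset.range ν,
          (-(T * Matrix.fromBlocks 0 0 0 (N ^ k) * S)).mulVec (iteratedDeriv k q s)) :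
    ∀ t ∈ Set.Icc (0 : ℝ) τ, E.mulVec (deriv x t) = A.mulVec (x t) + q t := by
  obtain ⟨s, hs, hcons⟩ := hcons
  have hconj : ∀ (B R : Matrix (Fin nd ⊕ Fin na) (Fin nd ⊕ Fin na) F) v,
      T⁻¹ *ᵥ ((T * B * R) *ᵥ v) = B *ᵥ (R *ᵥ v) := by
    intro B R v
    rw [mulVec_mulVec, Matrix.mul_assoc, nonsing_inv_mul_cancel_left _ _ hT, mulVec_mulVec]
  have hdae := fromBlocks_dae_of_underlying_ode hN (convex_Icc 0 τ)
    (y := fun t => T⁻¹ *ᵥ x t) (p := fun k t => S *ᵥ iteratedDeriv k q t)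
    (fun t _ => (hx.differentiable one_ne_zero t).hasDerivAt.const_mulVec T⁻¹)
    (fun k t _ => (hq.hasDerivAt_iteratedDeriv k t).const_mulVec S)
    (fun t ht => by
      rw [hode t ht, mulVec_add, hconj, mulVec_sum]
      congr 1
      refine sum_congr rfl fun k _ => ?_
      split_ifs <;> simp [hconj, neg_mulVec, mulVec_neg])
    hs (by
      conv_lhs => rw [hcons]
      simp [mulVec_add, mulVec_sum, hconj, neg_mulVec, mulVec_neg])
  intro t ht
  rw [eq_inv_mul_mul_inv_of_mul_mul_eq hS hT hE, eq_inv_mul_mul_inv_of_mul_mul_eq hS hT hA,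
    ← mulVec_mulVec, ← mulVec_mulVec, hdae t ht, mulVec_add, iteratedDeriv_zero]
  simp only [mulVec_mulVec, Matrix.mul_assoc, nonsing_inv_mul _ hS, one_mulVec]
end

section
/- An initial condition x₀ ∈ F^n is consistent for the regular DAE E ẋ = A x + q (with q smooth) if and only if x₀ = A^con x₀ + ∑_{k=1}^{ν} C_k q^{(k−1)}(0); and in that case the initial value problem has a unique C^∞ solution on [0,τ]. -/
/-!
In the coordinates `z = T⁻¹ x` the DAE splits along `Fin nd ⊕ Fin na` into the ODE
`z₁' = J z₁ + p₁` and the equation `N z₂' = z₂ + p₂`, where `p = S q`. The ODE has a unique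
solution for every initial value, given by variation of constants. Since `N` is nilpotent, the
second equation has exactly one solution, `z₂ = -∑_{k<ν} N^k p₂^(k)`, so its initial value is
not free: if `N w' = w` then `N^j w = 0` descends from `j = ν` to `j = 0`, because
`N^(j+1) w = 0` forces `N^j w = N^(j+1) w' = 0`. So `x₀` is consistent exactly when the second block of `T⁻¹ x₀` is
`z₂(0)`, which is the stated formula.
-/

open Matrix
open scoped ContDiff

theorem ContinuousLinearMap.iteratedDeriv_comp {V W : Type*} [NormedAddCommGroup V]
    [NormedSpace ℝ V] [NormedAddCommGroup W] [NormedSpace ℝ W] (L : V →L[ℝ] W) {x : ℝ → V}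
    {k : ℕ} (h : ContDiff ℝ k x) (t : ℝ) :
    iteratedDeriv k (fun s => L (x s)) t = L (iteratedDeriv k x t) := by
  simp only [iteratedDeriv_eq_iteratedFDeriv]
  rw [show (fun s => L (x s)) = L ∘ x from rfl, L.iteratedFDeriv_comp_left h.contDiffAt le_rfl]
  rfl

section MatrixCalculus

variable {F : Type*} [RCLike F] {m n : Type*} [Fintype m] [Fintype n] (M : Matrix m n F)
  {x : ℝ → n → F}

noncomputable def Matrix.mulVecRealCLM : (n → F) →L[ℝ] (m → F) :=
  LinearMap.toContinuousLinearMap (M.mulVecLin.restrictScalars ℝ)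

theorem HasDerivAt.const_mulVec_s6 {x' : n → F} {t : ℝ} (h : HasDerivAt x x' t) :
    HasDerivAt (fun s => M *ᵥ x s) (M *ᵥ x') t :=
  M.mulVecRealCLM.hasFDerivAt.comp_hasDerivAt t h

theorem ContDiff.const_mulVec_s6 {k : WithTop ℕ∞} (h : ContDiff ℝ k x) :
    ContDiff ℝ k fun s => M *ᵥ x s :=
  M.mulVecRealCLM.contDiff.comp h

theorem iteratedDeriv_const_mulVec {k : ℕ} (h : ContDiff ℝ k x) (t : ℝ) :
    iteratedDeriv k (fun s => M *ᵥ x s) t = M *ᵥ iteratedDeriv k x t :=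
  M.mulVecRealCLM.iteratedDeriv_comp h t

end MatrixCalculus

section SumIndex

variable {F : Type*} [NormedAddCommGroup F] [NormedSpace ℝ F] {m n : Type*} {u : ℝ → m → F}
  {v : ℝ → n → F}

theorem HasDerivAt.sumElim {u' : m → F} {v' : n → F} {t : ℝ} (hu : HasDerivAt u u' t)
    (hv : HasDerivAt v v' t) :
    HasDerivAt (fun s => Sum.elim (u s) (v s)) (Sum.elim u' v') t :=
  hasDerivAt_pi.2 <| by rintro (i | j); exacts [hasDerivAt_pi.1 hu i, hasDerivAt_pi.1 hv j]

theorem ContDiff.sumElim [Fintype m] [Fintype n] {k : WithTop ℕ∞} (hu : ContDiff ℝ k u)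
    (hv : ContDiff ℝ k v) :
    ContDiff ℝ k fun s => Sum.elim (u s) (v s) :=
  contDiff_pi.2 <| by rintro (i | j); exacts [contDiff_pi.1 hu i, contDiff_pi.1 hv j]

theorem HasDerivAt.comp_index {ι : Type*} {z : ℝ → m → F} {z' : m → F} {t : ℝ}
    (e : ι → m) (h : HasDerivAt z z' t) : HasDerivAt (fun s => z s ∘ e) (z' ∘ e) t :=
  hasDerivAt_pi.2 fun i => hasDerivAt_pi.1 h (e i)

variable [Fintype m] {ι : Type*} [Fintype ι] {z : ℝ → m → F}

theorem ContDiff.comp_index {k : WithTop ℕ∞} (e : ι → m) (h : ContDiff ℝ k z) :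
    ContDiff ℝ k fun s => z s ∘ e :=
  contDiff_pi.2 fun i => contDiff_pi.1 h (e i)

theorem iteratedDeriv_comp_index [FiniteDimensional ℝ F] (e : ι → m) {k : ℕ}
    (h : ContDiff ℝ k z) (t : ℝ) :
    iteratedDeriv k (fun s => z s ∘ e) t = iteratedDeriv k z t ∘ e :=
  (LinearMap.toContinuousLinearMap (LinearMap.funLeft ℝ F e)).iteratedDeriv_comp h t

end SumIndex

section LinearODE

open NormedSpace

variable {E : Type*} [NormedAddCommGroup E] [NormedSpace ℝ E] (L : E →L[ℝ] E)
  {p u : ℝ → E}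

theorem contDiff_of_hasDerivAt_linear (hp : ContDiff ℝ ∞ p)
    (hu : ∀ t, HasDerivAt u (L (u t) + p t) t) : ContDiff ℝ ∞ u := by
  have hdiff : Differentiable ℝ u := fun t => (hu t).differentiableAt
  have hderiv : deriv u = fun t => L (u t) + p t := funext fun t => (hu t).deriv
  refine contDiff_infty.2 fun k => ?_
  induction k with
  | zero => exact contDiff_zero.2 hdiff.continuous
  | succ k ih =>
    rw [Nat.cast_succ]
    refine contDiff_succ_iff_deriv.2 ⟨hdiff, by simp, ?_⟩
    rw [hderiv]
    exact (L.contDiff.comp ih).add (hp.of_le (by exact_mod_cast le_top))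

theorem exists_contDiff_hasDerivAt_linear [CompleteSpace E] (hp : ContDiff ℝ ∞ p)
    (c : E) : ∃ u : ℝ → E, ContDiff ℝ ∞ u ∧ u 0 = c ∧ ∀ t, HasDerivAt u (L (u t) + p t) t := by
  -- the algebraic lemmas about `NormedSpace.exp` are stated for `ℚ`-algebras
  let := NormedAlgebra.restrictScalars ℚ ℝ (E →L[ℝ] E)
  -- variation of constants: `u t = exp (t L) (c + ∫₀ᵗ exp (-s L) p s ds)`
  set g : ℝ → E := fun s => exp (-(s • L)) (p s)
  have hg : Continuous g :=
    (exp_continuous.comp (continuous_id.smul continuous_const).neg).clm_apply hp.continuous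
  set u : ℝ → E := fun t => exp (t • L) (c + ∫ s in (0 : ℝ)..t, g s)
  have hu : ∀ t, HasDerivAt u (L (u t) + p t) t := by
    intro t
    have hint : HasDerivAt (fun t => c + ∫ s in (0 : ℝ)..t, g s) (g t) t :=
      (hg.integral_hasStrictDerivAt 0 t).hasDerivAt.const_add c
    have hcancel : exp (t • L) (g t) = p t := by
      rw [← mul_apply_eq_comp, ← NormedSpace.exp_add_of_commute (Commute.neg_right rfl),
        add_neg_cancel, exp_zero, one_apply_eq_self]
    simpa [u, hcancel] using (hasDerivAt_exp_smul_const' L t).clm_apply hint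
  exact ⟨u, contDiff_of_hasDerivAt_linear L hp hu, by simp [u], hu⟩

theorem eqOn_Icc_of_deriv_eq_linear {a b : ℝ} {f g : ℝ → E} (hf : Differentiable ℝ f)
    (hf' : ∀ t ∈ Set.Icc a b, deriv f t = L (f t) + p t) (hg : Differentiable ℝ g)
    (hg' : ∀ t ∈ Set.Icc a b, deriv g t = L (g t) + p t) (ha : f a = g a) :
    Set.EqOn f g (Set.Icc a b) := by
  have hlip : ∀ t, LipschitzWith ‖L‖₊ fun x => L x + p t := fun t x y => by
    simpa [edist_add_right] using L.lipschitz x y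
  refine ODE_solution_unique hlip hf.continuous.continuousOn (fun t ht => ?_)
    hg.continuous.continuousOn (fun t ht => ?_) ha
  · exact (hf' t (Set.Ico_subset_Icc_self ht) ▸ (hf t).hasDerivAt).hasDerivWithinAt
  · exact (hg' t (Set.Ico_subset_Icc_self ht) ▸ (hg t).hasDerivAt).hasDerivWithinAt

end LinearODE

namespace Matrix

variable {F : Type*} [RCLike F] {n : Type*} [Fintype n] [DecidableEq n]

section Nilpotent

variable {N : Matrix n n F} {ν : ℕ}

noncomputable def nilpotentSolution (N : Matrix n n F) (ν : ℕ) (p : ℝ → n → F) (t : ℝ) :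
    n → F :=
  -∑ k ∈ Finset.range ν, N ^ k *ᵥ iteratedDeriv k p t

variable {p : ℝ → n → F}

theorem contDiff_nilpotentSolution (hp : ContDiff ℝ ∞ p) :
    ContDiff ℝ ∞ (nilpotentSolution N ν p) :=
  (ContDiff.sum fun k _ =>
    ((iteratedDeriv_eq_iterate (f := p) (n := k)) ▸ hp.iterate_deriv k).const_mulVec_s6 (N ^ k)).neg

theorem hasDerivAt_nilpotentSolution (hp : ContDiff ℝ ∞ p) (t : ℝ) :
    HasDerivAt (nilpotentSolution N ν p)
      (-∑ k ∈ Finset.range ν, N ^ k *ᵥ iteratedDeriv (k + 1) p t) t := by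
  refine (HasDerivAt.fun_sum fun k _ => HasDerivAt.const_mulVec_s6 (N ^ k) ?_).neg
  rw [iteratedDeriv_succ]
  exact ((hp.differentiable_iteratedDeriv k (by exact_mod_cast WithTop.coe_lt_top _)) t).hasDerivAt

theorem mulVec_deriv_nilpotentSolution (hN : N ^ ν = 0) (hp : ContDiff ℝ ∞ p) (t : ℝ) :
    N *ᵥ deriv (nilpotentSolution N ν p) t = nilpotentSolution N ν p t + p t := by
  rw [(hasDerivAt_nilpotentSolution hp t).deriv, nilpotentSolution, mulVec_neg, mulVec_sum]
  have htel := Finset.sum_range_succ' (fun k => N ^ k *ᵥ iteratedDeriv k p t) ν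
  rw [Finset.sum_range_succ, hN, zero_mulVec, add_zero] at htel
  simp only [mulVec_mulVec, ← pow_succ', htel, pow_zero, one_mulVec, iteratedDeriv_zero]
  abel

variable {s : Set ℝ} {φ : ℝ → n → F}

theorem pow_mulVec_eq_zero_of_pow_succ (hs : UniqueDiffOn ℝ s) (hφ : Differentiable ℝ φ)
    (heq : ∀ t ∈ s, N *ᵥ deriv φ t = φ t) {j : ℕ}
    (hj : ∀ t ∈ s, N ^ (j + 1) *ᵥ φ t = 0) :
    ∀ t ∈ s, N ^ j *ᵥ φ t = 0 := by
  intro t ht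
  have hderiv : N ^ (j + 1) *ᵥ deriv φ t = 0 :=
    (hs t ht).eq_deriv _ ((hφ t).hasDerivAt.const_mulVec_s6 _).hasDerivWithinAt
      ((hasDerivWithinAt_const t s 0).congr hj (hj t ht))
  rw [← heq t ht, mulVec_mulVec, ← pow_succ, hderiv]

theorem eq_zero_of_mulVec_deriv_eq_self (hN : N ^ ν = 0) (hs : UniqueDiffOn ℝ s)
    (hφ : Differentiable ℝ φ) (heq : ∀ t ∈ s, N *ᵥ deriv φ t = φ t) :
    ∀ t ∈ s, φ t = 0 := by
  simpa using Nat.decreasingInduction (motive := fun j _ => ∀ t ∈ s, N ^ j *ᵥ φ t = 0)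
    (fun j _ => pow_mulVec_eq_zero_of_pow_succ hs hφ heq) (by simp [hN]) (Nat.zero_le ν)

theorem eqOn_nilpotentSolution (hN : N ^ ν = 0) (hs : UniqueDiffOn ℝ s)
    (hp : ContDiff ℝ ∞ p) {w : ℝ → n → F} (hw : Differentiable ℝ w)
    (heq : ∀ t ∈ s, N *ᵥ deriv w t = w t + p t) :
    Set.EqOn w (nilpotentSolution N ν p) s := by
  have hv : Differentiable ℝ (nilpotentSolution N ν p) :=
    (contDiff_nilpotentSolution hp).differentiable (by simp)
  have hsub := eq_zero_of_mulVec_deriv_eq_self hN hs (hw.sub hv) fun t ht => by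
    rw [deriv_sub (hw t) (hv t), mulVec_sub, heq t ht, mulVec_deriv_nilpotentSolution hN hp,
      Pi.sub_apply]
    abel
  exact fun t ht => sub_eq_zero.1 (hsub t ht)

end Nilpotent

variable {m : Type*} [Fintype m] [DecidableEq m]

structure IsQuasiWeierstrassForm (E A S T : Matrix (m ⊕ n) (m ⊕ n) F) (J : Matrix m m F)
    (N : Matrix n n F) : Prop where
  isUnit_det_left : IsUnit S.det
  isUnit_det_right : IsUnit T.det
  transform_E : S * E * T = fromBlocks 1 0 0 N
  transform_A : S * A * T = fromBlocks J 0 0 1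

variable {E A S T : Matrix (m ⊕ n) (m ⊕ n) F} {J : Matrix m m F} {N : Matrix n n F} {ν : ℕ}
  {q : ℝ → m ⊕ n → F}

theorem projection_add_sum_eq_mulVec_sumElim (hq : ContDiff ℝ ∞ q) (x₀ : m ⊕ n → F) :
    (T * fromBlocks 1 0 0 0 * T⁻¹) *ᵥ x₀ +
        ∑ k ∈ Finset.range ν, (-(T * fromBlocks 0 0 0 (N ^ k) * S)) *ᵥ iteratedDeriv k q 0 =
      T *ᵥ Sum.elim ((T⁻¹ *ᵥ x₀) ∘ Sum.inl)
        (nilpotentSolution N ν (fun t => (S *ᵥ q t) ∘ Sum.inr) 0) := by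
  have hderiv (k : ℕ) : iteratedDeriv k (fun t => (S *ᵥ q t) ∘ Sum.inr) 0 =
      (S *ᵥ iteratedDeriv k q 0) ∘ Sum.inr := by
    have hk : ContDiff ℝ k q := hq.of_le (by exact_mod_cast le_top)
    rw [iteratedDeriv_comp_index Sum.inr (hk.const_mulVec_s6 S), iteratedDeriv_const_mulVec S hk]
  simp only [neg_mulVec, ← mulVec_neg, Matrix.mul_assoc, ← mulVec_mulVec, ← mulVec_sum,
    ← mulVec_add]
  congr 1
  simp only [fromBlocks_mulVec, one_mulVec, zero_mulVec, add_zero, zero_add]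
  funext i
  cases i <;> simp [Finset.sum_apply, nilpotentSolution, hderiv, mulVec_neg, Pi.neg_comp]

namespace IsQuasiWeierstrassForm

theorem mulVec_inv_mulVec (h : IsQuasiWeierstrassForm E A S T J N) (w : m ⊕ n → F) :
    T *ᵥ (T⁻¹ *ᵥ w) = w := by
  rw [mulVec_mulVec, mul_nonsing_inv T h.isUnit_det_right, one_mulVec]

theorem inv_mulVec_mulVec (h : IsQuasiWeierstrassForm E A S T J N) (w : m ⊕ n → F) :
    T⁻¹ *ᵥ (T *ᵥ w) = w := by
  rw [mulVec_mulVec, nonsing_inv_mul T h.isUnit_det_right, one_mulVec]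

theorem mulVec_eq_iff (h : IsQuasiWeierstrassForm E A S T J N) (d w r : m ⊕ n → F) :
    E *ᵥ (T *ᵥ d) = A *ᵥ (T *ᵥ w) + r ↔
      d ∘ Sum.inl = J *ᵥ (w ∘ Sum.inl) + (S *ᵥ r) ∘ Sum.inl ∧
        N *ᵥ (d ∘ Sum.inr) = w ∘ Sum.inr + (S *ᵥ r) ∘ Sum.inr := by
  rw [← (mulVec_injective_of_isUnit ((isUnit_iff_isUnit_det S).2 h.isUnit_det_left)).eq_iff,
    mulVec_add, mulVec_mulVec, mulVec_mulVec, mulVec_mulVec, mulVec_mulVec, h.transform_E,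
    h.transform_A, fromBlocks_mulVec, fromBlocks_mulVec, ← Sum.elim_comp_inl_inr (S *ᵥ r),
    ← Sum.elim_add_add, Sum.elim_eq_iff]
  simp

theorem deriv_eq_iff (h : IsQuasiWeierstrassForm E A S T J N) {x : ℝ → m ⊕ n → F} {t : ℝ}
    (hx : DifferentiableAt ℝ x t) (r : m ⊕ n → F) :
    E *ᵥ deriv x t = A *ᵥ x t + r ↔
      deriv (fun s => (T⁻¹ *ᵥ x s) ∘ Sum.inl) t =
          J *ᵥ ((T⁻¹ *ᵥ x t) ∘ Sum.inl) + (S *ᵥ r) ∘ Sum.inl ∧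
        N *ᵥ deriv (fun s => (T⁻¹ *ᵥ x s) ∘ Sum.inr) t =
          (T⁻¹ *ᵥ x t) ∘ Sum.inr + (S *ᵥ r) ∘ Sum.inr := by
  have hz := hx.hasDerivAt.const_mulVec_s6 T⁻¹
  rw [(hz.comp_index Sum.inl).deriv, (hz.comp_index Sum.inr).deriv, ← h.mulVec_eq_iff,
    h.mulVec_inv_mulVec, h.mulVec_inv_mulVec]

theorem deriv_sumElim_eq_iff (h : IsQuasiWeierstrassForm E A S T J N) {u : ℝ → m → F}
    {v : ℝ → n → F} {t : ℝ} (hu : DifferentiableAt ℝ u t) (hv : DifferentiableAt ℝ v t)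
    (r : m ⊕ n → F) :
    E *ᵥ deriv (fun s => T *ᵥ Sum.elim (u s) (v s)) t =
        A *ᵥ (T *ᵥ Sum.elim (u t) (v t)) + r ↔
      deriv u t = J *ᵥ u t + (S *ᵥ r) ∘ Sum.inl ∧
        N *ᵥ deriv v t = v t + (S *ᵥ r) ∘ Sum.inr := by
  rw [h.deriv_eq_iff ((hu.hasDerivAt.sumElim hv.hasDerivAt).const_mulVec_s6 T).differentiableAt]
  simp only [h.inv_mulVec_mulVec, Sum.elim_comp_inl, Sum.elim_comp_inr]

theorem eqOn_Icc_of_solution (h : IsQuasiWeierstrassForm E A S T J N) (hN : N ^ ν = 0)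
    (hq : ContDiff ℝ ∞ q) {τ : ℝ} (hτ : 0 < τ) {u : ℝ → m → F}
    (hu : ∀ t, HasDerivAt u (J *ᵥ u t + (S *ᵥ q t) ∘ Sum.inl) t) {y : ℝ → m ⊕ n → F}
    (hy : Differentiable ℝ y) (hsol : ∀ t ∈ Set.Icc 0 τ, E *ᵥ deriv y t = A *ᵥ y t + q t)
    (h0 : (T⁻¹ *ᵥ y 0) ∘ Sum.inl = u 0) :
    Set.EqOn y
      (fun t => T *ᵥ Sum.elim (u t) (nilpotentSolution N ν (fun s => (S *ᵥ q s) ∘ Sum.inr) t))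
      (Set.Icc 0 τ) := by
  have hz (t : ℝ) := (hy t).hasDerivAt.const_mulVec_s6 T⁻¹
  have hslow := eqOn_Icc_of_deriv_eq_linear J.mulVecRealCLM
    (fun t => ((hz t).comp_index Sum.inl).differentiableAt)
    (fun t ht => ((h.deriv_eq_iff (hy t) _).1 (hsol t ht)).1)
    (fun t => (hu t).differentiableAt) (fun t _ => (hu t).deriv) h0
  have hfast := eqOn_nilpotentSolution hN (uniqueDiffOn_Icc hτ)
    ((hq.const_mulVec_s6 S).comp_index Sum.inr)
    (fun t => ((hz t).comp_index Sum.inr).differentiableAt)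
    (fun t ht => ((h.deriv_eq_iff (hy t) _).1 (hsol t ht)).2)
  intro t ht
  rw [← h.mulVec_inv_mulVec (y t), ← Sum.elim_comp_inl_inr (T⁻¹ *ᵥ y t)]
  exact congrArg (T *ᵥ ·) (congrArg₂ Sum.elim (hslow ht) (hfast ht))

end IsQuasiWeierstrassForm

end Matrix

/-- Consistency condition for a regular DAE `E ẋ = A x + q` (quasi-Weierstraß form
via `S, T`, nilpotent part `N` of index `ν`): `x₀` is consistent iff
`x₀ = A^con x₀ + ∑_{k=1}^{ν} C_k q^(k-1)(0)`, and in that case the initial value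
problem has a unique solution on `[0, τ]`, which is moreover C^∞. -/
theorem DAE_consistency_unique_solution {F : Type*} [RCLike F] {nd na ν : ℕ}
    (E A S T : Matrix (Fin nd ⊕ Fin na) (Fin nd ⊕ Fin na) F)
    (N : Matrix (Fin na) (Fin na) F) (J : Matrix (Fin nd) (Fin nd) F)
    (hS : IsUnit S.det) (hT : IsUnit T.det)
    (hE : S * E * T = Matrix.fromBlocks 1 0 0 N)
    (hA : S * A * T = Matrix.fromBlocks J 0 0 1)
    (hN : N ^ ν = 0)
    {τ : ℝ} (hτ : 0 < τ) (q : ℝ → (Fin nd ⊕ Fin na) → F)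
    (hq : ContDiff ℝ (⊤ : ℕ∞) q) (x₀ : (Fin nd ⊕ Fin na) → F) :
    ((∃ x : ℝ → (Fin nd ⊕ Fin na) → F, ContDiff ℝ 1 x ∧
        (∀ t ∈ Set.Icc (0 : ℝ) τ, E.mulVec (deriv x t) = A.mulVec (x t) + q t) ∧
        x 0 = x₀) ↔
      x₀ = (T * Matrix.fromBlocks 1 0 0 0 * T⁻¹).mulVec x₀ +
        ∑ k ∈ Finset.range ν,
          (-(T * Matrix.fromBlocks 0 0 0 (N ^ k) * S)).mulVec (iteratedDeriv k q 0)) ∧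
    (x₀ = (T * Matrix.fromBlocks 1 0 0 0 * T⁻¹).mulVec x₀ +
        ∑ k ∈ Finset.range ν,
          (-(T * Matrix.fromBlocks 0 0 0 (N ^ k) * S)).mulVec (iteratedDeriv k q 0) →
      ∃ x : ℝ → (Fin nd ⊕ Fin na) → F, ContDiff ℝ (⊤ : ℕ∞) x ∧
        (∀ t ∈ Set.Icc (0 : ℝ) τ, E.mulVec (deriv x t) = A.mulVec (x t) + q t) ∧
        x 0 = x₀ ∧
        ∀ y : ℝ → (Fin nd ⊕ Fin na) → F, ContDiff ℝ 1 y →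
          (∀ t ∈ Set.Icc (0 : ℝ) τ, E.mulVec (deriv y t) = A.mulVec (y t) + q t) →
          y 0 = x₀ → Set.EqOn y x (Set.Icc (0 : ℝ) τ)) := by
  have h : IsQuasiWeierstrassForm E A S T J N := ⟨hS, hT, hE, hA⟩
  have hp₂ := (hq.const_mulVec_s6 S).comp_index Sum.inr
  set v := nilpotentSolution N ν fun t => (S *ᵥ q t) ∘ Sum.inr
  have hv : ContDiff ℝ ∞ v := contDiff_nilpotentSolution hp₂
  obtain ⟨u, hu, hu0, hu'⟩ := exists_contDiff_hasDerivAt_linear J.mulVecRealCLM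
    ((hq.const_mulVec_s6 S).comp_index Sum.inl) ((T⁻¹ *ᵥ x₀) ∘ Sum.inl)
  set x := fun t => T *ᵥ Sum.elim (u t) (v t)
  have hx : ContDiff ℝ ∞ x := (hu.sumElim hv).const_mulVec_s6 T
  have hsol (t : ℝ) : E *ᵥ deriv x t = A *ᵥ x t + q t :=
    (h.deriv_sumElim_eq_iff (hu' t).differentiableAt (hv.differentiable (by simp) t) (q t)).2
      ⟨(hu' t).deriv, mulVec_deriv_nilpotentSolution hN hp₂ t⟩
  have huniq (y : ℝ → Fin nd ⊕ Fin na → F) (hy : ContDiff ℝ 1 y)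
      (hsoly : ∀ t ∈ Set.Icc 0 τ, E *ᵥ deriv y t = A *ᵥ y t + q t) (hy0 : y 0 = x₀) :
      Set.EqOn y x (Set.Icc 0 τ) :=
    h.eqOn_Icc_of_solution hN hq hτ hu' (hy.differentiable one_ne_zero) hsoly (by rw [hy0, hu0])
  rw [projection_add_sum_eq_mulVec_sumElim hq, ← hu0, eq_comm]
  refine ⟨⟨fun ⟨y, hy, hsoly, hy0⟩ => ?_,
    fun hx0 => ⟨x, hx.of_le (by exact_mod_cast le_top), fun t _ => hsol t, hx0⟩⟩,
    fun hx0 => ⟨x, hx, fun t _ => hsol t, hx0, huniq⟩⟩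
  exact (huniq y hy hsoly hy0 ⟨le_rfl, hτ.le⟩).symm.trans hy0
end

section
/- For the 2-dimensional DDAE with E = [[1,0],[0,0]], A = [[0,1],[1,0]], D = [[0,0],[0,−1]], f ≡ 0, τ = 1, and history φ(t) = ((t−1)³/3 + (t−1)² − 1, t³/3 + t² − 1), the second component of any solution satisfies x₂(t) = t² − 1 on [0,1], x₂(t) = 2t − 2 on [1,2], x₂(t) = 2 on (2,3), and x₂(t) = 0 for t ≥ 3; in particular the solution is discontinuous at t = 3. -/
/-!
Since `x₁(t) = x₂(t - 1)` and `ẋ₁ = x₂` (as a right derivative), on each interval `[n - 1, n)`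
the second component is the derivative of its own values one delay earlier. By the method of
steps, `x₂(t) = φ₂⁽ⁿ⁾(t - n)` on `[n - 1, n)`, where `φ₂` is the second component of the history:
every delay costs one derivative. For the cubic `φ₂(t) = t³/3 + t² - 1` this gives `t² - 1`,
`2t - 2`, `2` and then `0`, so `x₂` jumps from `2` to `0` at `t = 3`.
-/

open Set Filter
open scoped ContDiff

theorem HasDerivWithinAt.eq_of_eqOn_Ico {F : Type*} [NormedAddCommGroup F] [NormedSpace ℝ F]
    {f g : ℝ → F} {f' g' : F} {t b : ℝ} (hf : HasDerivWithinAt f f' (Ici t) t)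
    (hg : HasDerivAt g g' t) (htb : t < b) (hfg : EqOn f g (Ico t b)) : f' = g' :=
  (uniqueDiffWithinAt_Ici t).eq_deriv _ hf <|
    hg.hasDerivWithinAt.congr_of_eventuallyEq (eventuallyEq_of_mem (Ico_mem_nhdsGE htb) hfg)
      (hfg ⟨le_rfl, htb⟩)

theorem not_continuousAt_of_eqOn_Ioo {α β : Type*} [TopologicalSpace α] [LinearOrder α]
    [OrderTopology α] [DenselyOrdered α] [TopologicalSpace β] [T1Space β] {f : α → β} {a b : α}
    {c : β} (hab : a < b) (hf : EqOn f (fun _ => c) (Ioo a b)) (hb : f b ≠ c) :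
    ¬ ContinuousAt f b := fun hcont => by
  have hb_mem : b ∈ closure (Ioo a b) := by
    rw [closure_Ioo hab.ne]
    exact right_mem_Icc.2 hab.le
  exact hb (by simpa using hcont.continuousWithinAt.mem_closure hb_mem (t := {c}) hf)

section AdvancedDDAE

variable {x : ℝ → Fin 2 → ℝ}

theorem eqOn_deriv_comp_sub_one_of_eqOn (halg : ∀ t : ℝ, 0 ≤ t → x t 0 = x (t - 1) 1)
    (hode : ∀ t : ℝ, 0 ≤ t → HasDerivWithinAt (fun s => x s 0) (x t 1) (Ici t) t)
    {g : ℝ → ℝ} (hg : Differentiable ℝ g) {a : ℝ} (ha : 0 ≤ a)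
    (hx : EqOn (fun t => x t 1) g (Ico (a - 1) a)) :
    EqOn (fun t => x t 1) (fun t => deriv g (t - 1)) (Ico a (a + 1)) := by
  rintro t ⟨hat, hta⟩
  refine (hode t (ha.trans hat)).eq_of_eqOn_Ico ((hg (t - 1)).hasDerivAt.comp_sub_const t 1) hta ?_
  rintro s ⟨hts, hsa⟩
  exact (halg s (by linarith)).trans (hx ⟨by linarith, by linarith⟩)

theorem eqOn_iteratedDeriv_of_eqOn_history (halg : ∀ t : ℝ, 0 ≤ t → x t 0 = x (t - 1) 1)
    (hode : ∀ t : ℝ, 0 ≤ t → HasDerivWithinAt (fun s => x s 0) (x t 1) (Ici t) t)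
    {φ : ℝ → ℝ} (hφ : ContDiff ℝ ∞ φ) (hhist : EqOn (fun t => x t 1) φ (Ico (-1) 0))
    (n : ℕ) :
    EqOn (fun t => x t 1) (fun t => iteratedDeriv n φ (t - n)) (Ico ((n : ℝ) - 1) n) := by
  induction n with
  | zero => simpa using hhist
  | succ n ih =>
    have hdiff : Differentiable ℝ (fun t => iteratedDeriv n φ (t - n)) :=
      (hφ.differentiable_iteratedDeriv n (by exact_mod_cast ENat.natCast_lt_top n)).comp
        (differentiable_id.sub_const _)
    intro t ht
    refine (eqOn_deriv_comp_sub_one_of_eqOn halg hode hdiff n.cast_nonneg ih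
      (by simpa using ht)).trans ?_
    dsimp only
    rw [deriv_comp_sub_const, iteratedDeriv_succ]
    congr 1
    push_cast
    ring

theorem eq_zero_of_iteratedDeriv_eq_zero (halg : ∀ t : ℝ, 0 ≤ t → x t 0 = x (t - 1) 1)
    (hode : ∀ t : ℝ, 0 ≤ t → HasDerivWithinAt (fun s => x s 0) (x t 1) (Ici t) t)
    {φ : ℝ → ℝ} (hφ : ContDiff ℝ ∞ φ) (hhist : EqOn (fun t => x t 1) φ (Ico (-1) 0))
    {N : ℕ} (hN : ∀ n ≥ N, iteratedDeriv n φ = 0) {t : ℝ} (ht₀ : 0 ≤ t) (ht : (N : ℝ) ≤ t + 1) :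
    x t 1 = 0 := by
  have hmem : t ∈ Ico (((⌊t⌋₊ + 1 : ℕ) : ℝ) - 1) (⌊t⌋₊ + 1 : ℕ) := by
    push_cast
    exact ⟨by linarith [Nat.floor_le ht₀], Nat.lt_floor_add_one t⟩
  have hN_le : N ≤ ⌊t⌋₊ + 1 := by
    have : (N : ℝ) < ⌊t⌋₊ + 2 := by linarith [Nat.lt_floor_add_one t]
    exact Nat.lt_succ_iff.1 (by exact_mod_cast this)
  rw [show x t 1 = _ from eqOn_iteratedDeriv_of_eqOn_history halg hode hφ hhist _ hmem,
    hN _ hN_le]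
  rfl

end AdvancedDDAE

theorem iteratedDeriv_cubic_history :
    iteratedDeriv 1 (fun t : ℝ => t ^ 3 / 3 + t ^ 2 - 1) = (fun t => t ^ 2 + 2 * t) ∧
    iteratedDeriv 2 (fun t : ℝ => t ^ 3 / 3 + t ^ 2 - 1) = (fun t => 2 * t + 2) ∧
    iteratedDeriv 3 (fun t : ℝ => t ^ 3 / 3 + t ^ 2 - 1) = (fun _ => 2) ∧
    ∀ n ≥ 4, iteratedDeriv n (fun t : ℝ => t ^ 3 / 3 + t ^ 2 - 1) = 0 := by
  have d1 : deriv (fun t : ℝ => t ^ 3 / 3 + t ^ 2 - 1) = fun t => t ^ 2 + 2 * t := by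
    ext t
    exact ((((hasDerivAt_pow 3 t).div_const 3).add (hasDerivAt_pow 2 t)).sub_const 1).congr_deriv
      (by norm_num) |>.deriv
  have d2 : deriv (fun t : ℝ => t ^ 2 + 2 * t) = fun t => 2 * t + 2 := by
    ext t
    exact ((hasDerivAt_pow 2 t).add ((hasDerivAt_id t).const_mul 2)).congr_deriv
      (by norm_num) |>.deriv
  have d3 : deriv (fun t : ℝ => 2 * t + 2) = fun _ => 2 := by
    ext t
    exact (((hasDerivAt_id t).const_mul 2).add_const 2).congr_deriv (by norm_num) |>.deriv
  have d_const : deriv (fun _ : ℝ => (2 : ℝ)) = 0 := by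
    ext t
    simp
  refine ⟨by simp [d1], by simp [iteratedDeriv_succ, d1, d2],
    by simp [iteratedDeriv_succ, d1, d2, d3], fun n hn => ?_⟩
  obtain ⟨k, rfl⟩ := Nat.exists_eq_add_of_le' hn
  rw [iteratedDeriv_eq_iterate, Function.iterate_add_apply]
  simp only [Function.iterate_succ_apply', Function.iterate_zero_apply, d1, d2, d3, d_const]
  exact Function.iterate_fixed (by simp) k

/-- Example 2 of the paper (advanced / de-smoothing behavior): for the 2-dimensional
DDAE `ẋ₁(t) = x₂(t)`, `0 = x₁(t) - x₂(t-1)` (i.e. `E = [[1,0],[0,0]]`,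
`A = [[0,1],[1,0]]`, `D = [[0,0],[0,-1]]`, `f ≡ 0`, `τ = 1`) with the stated smooth
history, the second component of any solution satisfies `x₂(t) = t² - 1` on `[0,1]`,
`x₂(t) = 2t - 2` on `[1,2]`, `x₂(t) = 2` on `(2,3)` and `x₂(t) = 0` for `t ≥ 3`; in
particular the solution is discontinuous at `t = 3`. -/
theorem example_advanced_type (x : ℝ → Fin 2 → ℝ)
    (hist : ∀ t ∈ Set.Icc (-1 : ℝ) 0,
      x t = ![(t - 1) ^ 3 / 3 + (t - 1) ^ 2 - 1, t ^ 3 / 3 + t ^ 2 - 1])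
    (halg : ∀ t : ℝ, 0 ≤ t → x t 0 = x (t - 1) 1)
    (hode : ∀ t : ℝ, 0 ≤ t → HasDerivWithinAt (fun s => x s 0) (x t 1) (Set.Ici t) t) :
    (∀ t ∈ Set.Icc (0 : ℝ) 1, x t 1 = t ^ 2 - 1) ∧
    (∀ t ∈ Set.Icc (1 : ℝ) 2, x t 1 = 2 * t - 2) ∧
    (∀ t ∈ Set.Ioo (2 : ℝ) 3, x t 1 = 2) ∧
    (∀ t : ℝ, 3 ≤ t → x t 1 = 0) ∧
    ¬ ContinuousAt (fun t => x t 1) 3 := by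
  have hhist : EqOn (fun t => x t 1) (fun t => t ^ 3 / 3 + t ^ 2 - 1) (Ico (-1) 0) :=
    fun t ht => by simp [hist t (Ico_subset_Icc_self ht)]
  have hφ : ContDiff ℝ ∞ (fun t : ℝ => t ^ 3 / 3 + t ^ 2 - 1) := by fun_prop
  have hx := eqOn_iteratedDeriv_of_eqOn_history halg hode hφ hhist
  obtain ⟨d1, d2, d3, d4⟩ := iteratedDeriv_cubic_history
  have h01 : ∀ t ∈ Ico (0 : ℝ) 1, x t 1 = t ^ 2 - 1 := fun t ht => by
    rw [show x t 1 = _ from hx 1 (by norm_num [ht.1, ht.2]), d1]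
    ring
  have h12 : ∀ t ∈ Ico (1 : ℝ) 2, x t 1 = 2 * t - 2 := fun t ht => by
    rw [show x t 1 = _ from hx 2 (by norm_num; constructor <;> linarith [ht.1, ht.2]), d2]
    ring
  have h23 : ∀ t ∈ Ico (2 : ℝ) 3, x t 1 = 2 := fun t ht => by
    rw [show x t 1 = _ from hx 3 (by norm_num; constructor <;> linarith [ht.1, ht.2]), d3]
  have htail : ∀ t : ℝ, 3 ≤ t → x t 1 = 0 := fun t ht =>
    eq_zero_of_iteratedDeriv_eq_zero halg hode hφ hhist d4 (by linarith) (by norm_num; linarith)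
  refine ⟨fun t ht => ?_, fun t ht => ?_, fun t ht => h23 t (Ioo_subset_Ico_self ht), htail,
    not_continuousAt_of_eqOn_Ioo (by norm_num) (fun t ht => h23 t (Ioo_subset_Ico_self ht))
      (by norm_num [htail 3 le_rfl])⟩
  · rcases ht.2.lt_or_eq with h | rfl
    · exact h01 t ⟨ht.1, h⟩
    · rw [h12 1 (by norm_num)]; norm_num
  · rcases ht.2.lt_or_eq with h | rfl
    · exact h12 t ⟨ht.1, h⟩
    · rw [h23 2 (by norm_num)]; norm_num
end
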